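/- arXiv:1809.01820 — 11 statements merged into one kernel-verified Lean document; each statement's English description precedes it below -/
import Mathlib

section
/- For all real numbers a, b > 0 and λ ∈ [0,1], with r = min(λ, 1-λ), one has r*(√a - √b)² ≤ (1-λ)a + λb - a^(1-λ)b^λ ≤ (1-r)*(√a - √b)². -/
/-!
For `λ ≤ 1/2` both bounds are instances of the weighted AM–GM inequality with `√(ab)` as one of
the points: the lower bound comes from `a^(1-λ) b^λ = a^(1-2λ) √(ab)^(2λ)`, the upper bound from
`√(ab) = (a^(1-λ) b^λ)^t b^(1-t)` with `t = 1/(2(1-λ))`. The case `λ ≥ 1/2` reduces to this one by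
exchanging `a` with `b` and `λ` with `1 - λ`.
-/

open Real

noncomputable def youngGap (l a b : ℝ) : ℝ := (1 - l) * a + l * b - a ^ (1 - l) * b ^ l

lemma youngGap_one_sub (l a b : ℝ) : youngGap (1 - l) b a = youngGap l a b := by
  simp only [youngGap, sub_sub_cancel]
  ring

lemma sqrt_sub_sqrt_sq {a b : ℝ} (ha : 0 ≤ a) (hb : 0 ≤ b) :
    (√a - √b) ^ 2 = a + b - 2 * √(a * b) := by
  rw [sub_sq, sq_sqrt ha, sq_sqrt hb, sqrt_mul ha]
  ring

lemma mul_sqrt_sub_sqrt_sq_le_youngGap {l a b : ℝ} (ha : 0 ≤ a) (hb : 0 ≤ b)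
    (hl₀ : 0 ≤ l) (hl : l ≤ 1 / 2) :
    l * (√a - √b) ^ 2 ≤ youngGap l a b := by
  have hsplit : a ^ (1 - 2 * l) * √(a * b) ^ (2 * l) = a ^ (1 - l) * b ^ l := by
    rw [sqrt_eq_rpow, ← rpow_mul (by positivity), mul_rpow ha hb,
      show 1 / 2 * (2 * l) = l by ring, ← mul_assoc, ← rpow_add' ha (by linarith)]
    ring_nf
  have amgm : a ^ (1 - l) * b ^ l ≤ (1 - 2 * l) * a + 2 * l * √(a * b) :=
    hsplit ▸ geom_mean_le_arith_mean2_weighted (by linarith) (by linarith) ha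
      (sqrt_nonneg (a * b)) (sub_add_cancel 1 (2 * l))
  rw [youngGap, sqrt_sub_sqrt_sq ha hb]
  linarith

lemma youngGap_le_one_sub_mul_sqrt_sub_sqrt_sq {l a b : ℝ} (ha : 0 ≤ a) (hb : 0 ≤ b)
    (hl : l ≤ 1 / 2) :
    youngGap l a b ≤ (1 - l) * (√a - √b) ^ 2 := by
  rw [youngGap, sqrt_sub_sqrt_sq ha hb]
  set c := a ^ (1 - l) * b ^ l
  set t := 1 / (2 * (1 - l)) with ht
  have hl₁ : 0 < 1 - l := by linarith
  have ht₁ : t ≤ 1 := by rw [ht, div_le_one (by linarith)]; linarith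
  have hsplit : c ^ t * b ^ (1 - t) = √(a * b) := by
    have ha' : (1 - l) * t = 1 / 2 := by rw [ht]; field_simp
    have hb' : l * t + (1 - t) = 1 / 2 := by rw [ht]; field_simp; ring
    rw [mul_rpow (by positivity) (by positivity), ← rpow_mul ha, ← rpow_mul hb, mul_assoc,
      ← rpow_add' hb (by linarith), ha', hb', ← mul_rpow ha hb, ← sqrt_eq_rpow]
  have amgm : √(a * b) ≤ t * c + (1 - t) * b :=
    hsplit ▸ geom_mean_le_arith_mean2_weighted (by positivity) (by linarith)
      (by positivity) hb (add_sub_cancel t 1)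
  have htl : 2 * (1 - l) * t = 1 := by rw [ht]; field_simp
  clear_value c t
  linear_combination 2 * (1 - l) * amgm + (c - b) * htl

theorem kittaneh_manasrah (a b l : ℝ) (ha : 0 < a) (hb : 0 < b)
    (hl : l ∈ Set.Icc (0:ℝ) 1) :
    min l (1 - l) * (Real.sqrt a - Real.sqrt b) ^ 2 ≤
      (1 - l) * a + l * b - a ^ (1 - l) * b ^ l ∧
    (1 - l) * a + l * b - a ^ (1 - l) * b ^ l ≤
      (1 - min l (1 - l)) * (Real.sqrt a - Real.sqrt b) ^ 2 := by
  obtain ⟨hl₀, hl₁⟩ := hl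
  rw [← youngGap]
  rcases le_total l (1 / 2) with hl | hl
  · rw [min_eq_left (by linarith)]
    exact ⟨mul_sqrt_sub_sqrt_sq_le_youngGap ha.le hb.le hl₀ hl,
      youngGap_le_one_sub_mul_sqrt_sub_sqrt_sq ha.le hb.le hl⟩
  · rw [min_eq_right (by linarith), ← youngGap_one_sub, sub_sq_comm √a]
    exact ⟨mul_sqrt_sub_sqrt_sq_le_youngGap hb.le ha.le (by linarith) (by linarith),
      youngGap_le_one_sub_mul_sqrt_sub_sqrt_sq hb.le ha.le (by linarith)⟩
end

section
/- For all real numbers a, b > 0 and λ ∈ [0,1], the Heinz mean is bounded above by the Heron mean with parameter (2λ-1)²: (a^(1-λ)b^λ + a^λb^(1-λ))/2 ≤ (1 - (2λ-1)²)√(ab) + (2λ-1)²(a+b)/2. -/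
/-!
Writing `a = e^(m+u)` and `b = e^(m-u)`, the Heinz mean is `e^m cosh((2λ-1)u)` and the Heron mean
with parameter `ν²` is `e^m (1 - ν² + ν² cosh u)`. So the claim reduces to
`cosh(νu) ≤ 1 - ν² + ν² cosh u` for `|ν| ≤ 1`, which by `cosh y = 1 + 2 sinh²(y/2)` is
`|sinh(νx)| ≤ |ν| |sinh x|`: the convexity of `sinh` on `[0, ∞)` together with `sinh 0 = 0`.
-/

open Set Real

namespace Real

theorem convexOn_sinh_Ici : ConvexOn ℝ (Ici 0) sinh := by
  refine MonotoneOn.convexOn_of_deriv (convex_Ici 0) continuous_sinh.continuousOn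
    differentiable_sinh.differentiableOn ?_
  rw [deriv_sinh, interior_Ici]
  intro x hx y hy hxy
  exact cosh_le_cosh.2 (by rwa [abs_of_pos hx, abs_of_pos hy])

theorem sinh_mul_le_mul_sinh {t x : ℝ} (ht₀ : 0 ≤ t) (ht₁ : t ≤ 1) (hx : 0 ≤ x) :
    sinh (t * x) ≤ t * sinh x := by
  simpa using convexOn_sinh_Ici.2 (mem_Ici.2 hx) (mem_Ici.2 le_rfl) ht₀ (sub_nonneg.2 ht₁)
    (add_sub_cancel t 1)

theorem abs_sinh_mul_le {t : ℝ} (ht : |t| ≤ 1) (x : ℝ) : |sinh (t * x)| ≤ |t| * |sinh x| := by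
  rw [abs_sinh, abs_sinh, abs_mul]
  exact sinh_mul_le_mul_sinh (abs_nonneg t) ht (abs_nonneg x)

theorem cosh_eq_one_add_two_mul_sinh_half_sq (x : ℝ) : cosh x = 1 + 2 * sinh (x / 2) ^ 2 := by
  conv_lhs => rw [← mul_div_cancel₀ x two_ne_zero, cosh_two_mul, cosh_sq']
  ring

theorem cosh_mul_le {t : ℝ} (ht : |t| ≤ 1) (x : ℝ) : cosh (t * x) ≤ 1 - t ^ 2 + t ^ 2 * cosh x := by
  have hsinh : sinh (t * (x / 2)) ^ 2 ≤ t ^ 2 * sinh (x / 2) ^ 2 := by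
    rw [← sq_abs, ← sq_abs t, ← sq_abs (sinh _), ← mul_pow]
    exact pow_le_pow_left₀ (abs_nonneg _) (abs_sinh_mul_le ht _) 2
  rw [cosh_eq_one_add_two_mul_sinh_half_sq, cosh_eq_one_add_two_mul_sinh_half_sq x, mul_div_assoc]
  linarith

theorem rpow_one_sub_mul_rpow_add_eq_sqrt_mul_cosh {a b : ℝ} (ha : 0 < a) (hb : 0 < b) (l : ℝ) :
    a ^ (1 - l) * b ^ l + a ^ l * b ^ (1 - l) =
      2 * √(a * b) * cosh ((2 * l - 1) * ((log a - log b) / 2)) := by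
  set m := (log a + log b) / 2 with hm
  set y := (2 * l - 1) * ((log a - log b) / 2)
  have hab : √(a * b) = exp m := by
    rw [sqrt_eq_rpow, rpow_def_of_pos (mul_pos ha hb), log_mul ha.ne' hb.ne', hm]
    ring_nf
  have hexp (p q : ℝ) : a ^ p * b ^ q = exp (p * log a + q * log b) := by
    rw [rpow_def_of_pos ha, rpow_def_of_pos hb, ← exp_add]
    ring_nf
  rw [hexp, hexp, hab, cosh_eq, show (1 - l) * log a + l * log b = m + -y by ring,
    show l * log a + (1 - l) * log b = m + y by ring, exp_add, exp_add]
  ring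

end Real

theorem heinz_le_heron (a b l : ℝ) (ha : 0 < a) (hb : 0 < b)
    (hl : l ∈ Set.Icc (0:ℝ) 1) :
    (a ^ (1 - l) * b ^ l + a ^ l * b ^ (1 - l)) / 2 ≤
      (1 - (2 * l - 1) ^ 2) * Real.sqrt (a * b) + (2 * l - 1) ^ 2 * ((a + b) / 2) := by
  set u := (log a - log b) / 2
  have hν : |2 * l - 1| ≤ 1 := abs_le.2 ⟨by linarith [hl.1], by linarith [hl.2]⟩
  have heron : a + b = 2 * √(a * b) * cosh u := by
    have h := rpow_one_sub_mul_rpow_add_eq_sqrt_mul_cosh ha hb 1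
    norm_num at h
    rw [add_comm, h]
  have hcosh := mul_le_mul_of_nonneg_left (cosh_mul_le hν u) (sqrt_nonneg (a * b))
  rw [rpow_one_sub_mul_rpow_add_eq_sqrt_mul_cosh ha hb l, heron]
  linarith
end

section
/- For all real numbers a, b > 0 and λ ∈ [0,1], (a^(1-λ)b^λ + a^λb^(1-λ))/2 + min(λ,1-λ)*(√a - √b)² ≤ (a+b)/2. -/
/-!
For `λ ≤ 1/2` write `a^(1-λ) b^λ = a^(1-2λ) (√(ab))^(2λ)` and apply weighted AM–GM with weights
`1 - 2λ, 2λ`; together with the symmetric bound for `a^λ b^(1-λ)` this gives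
`HZ_λ(a,b) ≤ (1-2λ)(a+b)/2 + 2λ√(ab) = (a+b)/2 - λ(√a - √b)²`.
The case `λ ≥ 1/2` follows from the symmetry `HZ_{1-λ} = HZ_λ`.
-/

open Real

noncomputable def heinzMean (l a b : ℝ) : ℝ :=
  (a ^ (1 - l) * b ^ l + a ^ l * b ^ (1 - l)) / 2

lemma heinzMean_one_sub (l a b : ℝ) : heinzMean (1 - l) a b = heinzMean l a b := by
  simp only [heinzMean, sub_sub_cancel]
  ring

lemma rpow_one_sub_mul_rpow_le {a b l : ℝ} (ha : 0 < a) (hb : 0 < b)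
    (hl0 : 0 ≤ l) (hl : l ≤ 1 / 2) :
    a ^ (1 - l) * b ^ l ≤ (1 - 2 * l) * a + 2 * l * (√a * √b) := by
  have hgeom : (√a * √b) ^ (2 * l) = a ^ l * b ^ l := by
    rw [sqrt_eq_rpow, sqrt_eq_rpow, mul_rpow (by positivity) (by positivity),
      ← rpow_mul ha.le, ← rpow_mul hb.le, show (1 : ℝ) / 2 * (2 * l) = l by ring]
  calc a ^ (1 - l) * b ^ l = a ^ (1 - 2 * l) * (√a * √b) ^ (2 * l) := by
        rw [hgeom, ← mul_assoc, ← rpow_add ha]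
        ring_nf
    _ ≤ (1 - 2 * l) * a + 2 * l * (√a * √b) :=
        geom_mean_le_arith_mean2_weighted (by linarith) (by linarith) ha.le
          (by positivity) (by ring)

lemma heinzMean_add_mul_sq_le_of_le_half {a b l : ℝ} (ha : 0 < a) (hb : 0 < b)
    (hl0 : 0 ≤ l) (hl : l ≤ 1 / 2) :
    heinzMean l a b + l * (√a - √b) ^ 2 ≤ (a + b) / 2 := by
  have hab := rpow_one_sub_mul_rpow_le ha hb hl0 hl
  have hba := rpow_one_sub_mul_rpow_le hb ha hl0 hl
  have hsq : (√a - √b) ^ 2 = a + b - 2 * (√a * √b) := by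
    rw [sub_sq, sq_sqrt ha.le, sq_sqrt hb.le]
    ring
  rw [heinzMean, hsq]
  linarith [mul_comm (a ^ l) (b ^ (1 - l)), mul_comm √b √a]

theorem heinz_plus_min (a b l : ℝ) (ha : 0 < a) (hb : 0 < b)
    (hl : l ∈ Set.Icc (0:ℝ) 1) :
    (a ^ (1 - l) * b ^ l + a ^ l * b ^ (1 - l)) / 2 +
      min l (1 - l) * (Real.sqrt a - Real.sqrt b) ^ 2 ≤ (a + b) / 2 := by
  change heinzMean l a b + min l (1 - l) * (√a - √b) ^ 2 ≤ (a + b) / 2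
  obtain ⟨hl0, hl1⟩ := hl
  wlog hl : l ≤ 1 / 2 generalizing l
  · have := this (1 - l) (by linarith) (by linarith) (by linarith)
    rwa [heinzMean_one_sub, sub_sub_cancel, min_comm] at this
  rw [min_eq_left (by linarith)]
  exact heinzMean_add_mul_sq_le_of_le_half ha hb hl0 hl
end

section
/- For all real numbers a, b > 0 and λ ∈ [0,1], the Heinz mean satisfies the reverse inequality (a^(1-λ)b^λ + a^λb^(1-λ))/2 ≥ (a+b)/2 - (1/2)λ(1-λ)(b-a)log(b/a). -/
/-!
Write `b = a * exp x` with `x = log (b / a)`, which may be taken nonnegative since the inequality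
is symmetric in `a` and `b`. Dividing by `a`, the claim becomes
`(exp (λx) - 1) (exp ((1 - λ)x) - 1) ≤ λ(1 - λ) x (exp x - 1)`, that is `g p * g q ≤ g (p + q)`
for `g t = (exp t - 1) / t`, `p = λx`, `q = (1 - λ)x`. Cleared of denominators, the difference
of the two sides vanishes at `p = 0` together with its `p`-derivative, and its second
`p`-derivative is `exp p * ((q - 2) exp q + q + 2 + p (q exp q - exp q + 1))`, which is
nonnegative for `p, q ≥ 0`.
-/

open Real Set

lemma le_of_hasDerivAt_nonneg_Ici {f f' : ℝ → ℝ} {a x : ℝ}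
    (hf : ∀ y, a ≤ y → HasDerivAt f (f' y) y) (hf' : ∀ y, a ≤ y → 0 ≤ f' y) (hx : a ≤ x) :
    f a ≤ f x :=
  monotoneOn_of_hasDerivWithinAt_nonneg (convex_Ici a)
    (fun y hy ↦ (hf y hy).continuousAt.continuousWithinAt)
    (fun y hy ↦ (hf y (interior_subset hy)).hasDerivWithinAt)
    (fun y hy ↦ hf' y (interior_subset hy)) self_mem_Ici hx hx

namespace Real

lemma exp_sub_one_le_mul_exp (x : ℝ) : exp x - 1 ≤ x * exp x := by
  have h := mul_le_mul_of_nonneg_right (one_sub_le_exp_neg x) (exp_pos x).le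
  rwa [← exp_add, neg_add_cancel, exp_zero, sub_mul, one_mul, tsub_le_iff_tsub_le] at h

lemma sub_two_mul_exp_add_add_two_nonneg {x : ℝ} (hx : 0 ≤ x) :
    0 ≤ (x - 2) * exp x + x + 2 := by
  have hderiv (y : ℝ) :
      HasDerivAt (fun y ↦ (y - 2) * exp y + y + 2) ((y - 1) * exp y + 1) y :=
    ((((hasDerivAt_id' y).sub_const 2).mul (hasDerivAt_exp y)).add
      (hasDerivAt_id' y)).add_const 2 |>.congr_deriv (by ring)
  simpa using le_of_hasDerivAt_nonneg_Ici (fun y _ ↦ hderiv y)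
    (fun y _ ↦ by linarith [exp_sub_one_le_mul_exp y]) hx

lemma exp_sub_one_mul_exp_sub_one_mul_add_le {p q : ℝ} (hp : 0 ≤ p) (hq : 0 ≤ q) :
    (exp p - 1) * (exp q - 1) * (p + q) ≤ p * q * (exp (p + q) - 1) := by
  set F : ℝ → ℝ := fun p ↦ p * q * (exp (p + q) - 1) - (exp p - 1) * (exp q - 1) * (p + q)
  set F' : ℝ → ℝ := fun p ↦ q * (exp (p + q) - 1) + p * q * exp (p + q)
    - exp p * (exp q - 1) * (p + q) - (exp p - 1) * (exp q - 1)
  have hexp (y : ℝ) : HasDerivAt (fun p ↦ exp (p + q)) (exp (y + q)) y := by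
    simpa using ((hasDerivAt_id' y).add_const q).exp
  have hF (y : ℝ) : HasDerivAt F (F' y) y :=
    (((hasDerivAt_id' y).mul_const q).mul ((hexp y).sub_const 1)).sub
      ((((hasDerivAt_exp y).sub_const 1).mul_const (exp q - 1)).mul
        ((hasDerivAt_id' y).add_const q)) |>.congr_deriv (by ring)
  have hF' (y : ℝ) : HasDerivAt F'
      ((2 + y) * q * exp (y + q) - (2 + y + q) * exp y * (exp q - 1)) y :=
    ((((hexp y).sub_const 1).const_mul q).add
      (((hasDerivAt_id' y).mul_const q).mul (hexp y))).sub
      (((hasDerivAt_exp y).mul_const (exp q - 1)).mul ((hasDerivAt_id' y).add_const q)) |>.sub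
      (((hasDerivAt_exp y).sub_const 1).mul_const (exp q - 1)) |>.congr_deriv (by ring)
  have hF'_nonneg (y : ℝ) (hy : 0 ≤ y) : 0 ≤ F' y := by
    have h := le_of_hasDerivAt_nonneg_Ici (fun z _ ↦ hF' z) (fun z hz ↦ ?_) hy
    · simp [F'] at h
      linarith
    have h₁ := sub_two_mul_exp_add_add_two_nonneg hq
    have h₂ := mul_nonneg hz (sub_nonneg.2 (exp_sub_one_le_mul_exp q))
    have h₃ := mul_nonneg (exp_pos z).le (add_nonneg h₁ h₂)
    rw [exp_add]
    linear_combination h₃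
  simpa [F] using le_of_hasDerivAt_nonneg_Ici (fun y _ ↦ hF y) hF'_nonneg hp

lemma exp_mul_sub_one_mul_exp_one_sub_mul_sub_one_le {l x : ℝ} (hl0 : 0 ≤ l) (hl1 : l ≤ 1)
    (hx : 0 ≤ x) :
    (exp (l * x) - 1) * (exp ((1 - l) * x) - 1) ≤ l * (1 - l) * x * (exp x - 1) := by
  rcases hx.eq_or_lt with rfl | hx
  · simp
  have h := exp_sub_one_mul_exp_sub_one_mul_add_le (mul_nonneg hl0 hx.le)
    (mul_nonneg (sub_nonneg.2 hl1) hx.le)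
  rw [← add_mul, add_sub_cancel, one_mul] at h
  exact le_of_mul_le_mul_right (by linear_combination h) hx

lemma rpow_mul_rpow_of_add_eq_one {a b s t : ℝ} (ha : 0 < a) (hb : 0 ≤ b) (hst : s + t = 1) :
    a ^ s * b ^ t = a * (b / a) ^ t := by
  rw [eq_sub_of_add_eq hst, div_rpow hb ha.le, rpow_sub ha, rpow_one]
  field_simp

end Real

theorem reverse_heinz (a b l : ℝ) (ha : 0 < a) (hb : 0 < b)
    (hl : l ∈ Set.Icc (0:ℝ) 1) :
    (a ^ (1 - l) * b ^ l + a ^ l * b ^ (1 - l)) / 2 ≥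
      (a + b) / 2 - (1 / 2) * l * (1 - l) * (b - a) * Real.log (b / a) := by
  obtain ⟨hl0, hl1⟩ := hl
  wlog hab : a ≤ b generalizing a b
  · have h := this b a hb ha (le_of_not_ge hab)
    rw [← inv_div b a, log_inv] at h
    linear_combination h
  obtain ⟨x, hx, rfl⟩ : ∃ x, 0 ≤ x ∧ b = a * exp x :=
    ⟨log (b / a), log_nonneg ((one_le_div ha).2 hab),
      by rw [exp_log (div_pos hb ha), mul_div_cancel₀ _ ha.ne']⟩
  rw [rpow_mul_rpow_of_add_eq_one ha hb.le (sub_add_cancel 1 l),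
    rpow_mul_rpow_of_add_eq_one ha hb.le (add_sub_cancel l 1), mul_div_cancel_left₀ _ ha.ne',
    log_exp, ← exp_mul, ← exp_mul, mul_comm x l, mul_comm x (1 - l)]
  have hexp : exp (l * x) * exp ((1 - l) * x) = exp x := by rw [← exp_add]; ring_nf
  linear_combination (a / 2) * exp_mul_sub_one_mul_exp_one_sub_mul_sub_one_le hl0 hl1 hx
    - (a / 2) * hexp
end

section
/- For all real numbers a, b > 0 and λ ∈ [0,1], with r = min(λ,1-λ), one has (HZ_λ(a,b))² ≥ ((a+b)/2)² - (1/2)(1-r)(a-b)², where HZ_λ(a,b) = (a^(1-λ)b^λ + a^λb^(1-λ))/2. -/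
/-! The two Heinz terms x = a^(1-λ) b^λ and y = a^λ b^(1-λ) have product ab, so by AM-GM
HZ_λ(a,b)² ≥ ab. Since r_λ ≤ 1/2, the right-hand side is at most
((a+b)/2)² - (1/4)(a-b)² = ab. -/

lemma rpow_one_sub_mul_rpow_mul_swap {a b : ℝ} (ha : 0 < a) (hb : 0 < b) (l : ℝ) :
    a ^ (1 - l) * b ^ l * (a ^ l * b ^ (1 - l)) = a * b := by
  rw [mul_mul_mul_comm, ← Real.rpow_add ha, mul_comm (b ^ l), ← Real.rpow_add hb, sub_add_cancel,
    Real.rpow_one, Real.rpow_one]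

lemma mul_le_sq_add_div_two (x y : ℝ) : x * y ≤ ((x + y) / 2) ^ 2 := by
  nlinarith [four_mul_le_sq_add x y]

lemma min_self_one_sub_le_one_half (l : ℝ) : min l (1 - l) ≤ 1 / 2 := by
  rcases le_total l (1 - l) with h | h <;> simp only [h, min_eq_left, min_eq_right] <;> linarith

lemma sq_add_div_two_sub_le_mul (a b : ℝ) {c : ℝ} (hc : 1 / 2 ≤ c) :
    ((a + b) / 2) ^ 2 - (1 / 2) * c * (a - b) ^ 2 ≤ a * b := by
  nlinarith [mul_le_mul_of_nonneg_right hc (sq_nonneg (a - b))]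

theorem squared_reverse_heinz_general (a b l : ℝ) (ha : 0 < a) (hb : 0 < b) :
    ((a ^ (1 - l) * b ^ l + a ^ l * b ^ (1 - l)) / 2) ^ 2 ≥
      ((a + b) / 2) ^ 2 - (1 / 2) * (1 - min l (1 - l)) * (a - b) ^ 2 :=
  calc ((a + b) / 2) ^ 2 - (1 / 2) * (1 - min l (1 - l)) * (a - b) ^ 2
      ≤ a * b := sq_add_div_two_sub_le_mul a b (by linarith [min_self_one_sub_le_one_half l])
    _ = a ^ (1 - l) * b ^ l * (a ^ l * b ^ (1 - l)) := (rpow_one_sub_mul_rpow_mul_swap ha hb l).symm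
    _ ≤ _ := mul_le_sq_add_div_two _ _

theorem squared_reverse_heinz (a b l : ℝ) (ha : 0 < a) (hb : 0 < b)
    (hl : l ∈ Set.Icc (0:ℝ) 1) :
    ((a ^ (1 - l) * b ^ l + a ^ l * b ^ (1 - l)) / 2) ^ 2 ≥
      ((a + b) / 2) ^ 2 - (1 / 2) * (1 - min l (1 - l)) * (a - b) ^ 2 :=
  squared_reverse_heinz_general a b l ha hb
end

section
/- Let a < b be real numbers and Φ : [a,b] → ℝ be convex. Then for all p ∈ [0,1]: Φ((a+b)/2) ≤ m(p) ≤ (1/(b-a)) ∫ₐᵇ Φ(t) dt ≤ M(p) ≤ (Φ(a)+Φ(b))/2, where m(p) = p·Φ((pb+(2-p)a)/2) + (1-p)·Φ(((1+p)b+(1-p)a)/2) and M(p) = (1/2)(Φ(pb+(1-p)a) + p·Φ(a) + (1-p)·Φ(b)). -/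
/-!
Cut `[a, b]` at `c = p b + (1 - p) a`, which divides it in the ratio `p : 1 - p`. The classical
Hermite–Hadamard inequalities on `[a, c]` and on `[c, b]`, weighted by these lengths, add up to
the two middle inequalities; the outer two are convexity of `Φ` applied to the same weights
`p, 1 - p`. The classical inequalities come from pairing `x` with its reflection `a + b - x`:
`2 Φ ((a + b) / 2) ≤ Φ x + Φ (a + b - x) ≤ Φ a + Φ b`, integrated over `[a, b]`.
-/

open MeasureTheory Set intervalIntegral

theorem IntervalIntegrable.comp_reflect {f : ℝ → ℝ} {a b : ℝ}
    (hf : IntervalIntegrable f volume a b) :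
    IntervalIntegrable (fun x ↦ f (a + b - x)) volume a b := by
  simpa using (hf.comp_sub_left (a + b)).symm

theorem intervalIntegral.two_mul_integral_eq_integral_add_reflect {f : ℝ → ℝ} {a b : ℝ}
    (hf : IntervalIntegrable f volume a b) :
    2 * ∫ x in a..b, f x = ∫ x in a..b, (f x + f (a + b - x)) := by
  have hreflect : ∫ x in a..b, f (a + b - x) = ∫ x in a..b, f x := by
    simp [integral_comp_sub_left]
  rw [integral_add hf hf.comp_reflect, hreflect, two_mul]

namespace ConvexOn

variable {s : Set ℝ} {Φ : ℝ → ℝ} {a b : ℝ}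

lemma map_le_of_eq_convex_comb (hΦ : ConvexOn ℝ s Φ) {x y z t : ℝ} (hx : x ∈ s)
    (hy : y ∈ s) (ht₀ : 0 ≤ t) (ht₁ : t ≤ 1) (hz : z = t * x + (1 - t) * y) :
    Φ z ≤ t * Φ x + (1 - t) * Φ y := by
  subst hz
  simpa only [smul_eq_mul] using hΦ.2 hx hy ht₀ (sub_nonneg.2 ht₁) (add_sub_cancel t 1)

lemma two_mul_map_midpoint_le (hΦ : ConvexOn ℝ (Icc a b) Φ) {x : ℝ} (hx : x ∈ Icc a b) :
    2 * Φ ((a + b) / 2) ≤ Φ x + Φ (a + b - x) := by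
  have hx' : a + b - x ∈ Icc a b := ⟨by linarith [hx.2], by linarith [hx.1]⟩
  have := hΦ.map_le_of_eq_convex_comb (z := (a + b) / 2) (t := 1 / 2) hx hx' (by norm_num)
    (by norm_num) (by ring)
  linarith

lemma add_map_reflect_le (hΦ : ConvexOn ℝ (Icc a b) Φ) {x : ℝ} (hx : x ∈ Icc a b) :
    Φ x + Φ (a + b - x) ≤ Φ a + Φ b := by
  obtain ⟨hax, hxb⟩ := hx
  rcases (hax.trans hxb).eq_or_lt with rfl | hab
  · obtain rfl : x = a := le_antisymm hxb hax
    simp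
  have ha : a ∈ Icc a b := left_mem_Icc.2 hab.le
  have hb : b ∈ Icc a b := right_mem_Icc.2 hab.le
  -- `x` and `a + b - x` are the same convex combination of `a, b` with the weights swapped.
  set t := (b - x) / (b - a)
  have ht₀ : 0 ≤ t := div_nonneg (by linarith) (by linarith)
  have ht₁ : t ≤ 1 := (div_le_one (by linarith)).2 (by linarith)
  have hΦx := hΦ.map_le_of_eq_convex_comb (z := x) ha hb ht₀ ht₁
    (by simp only [t]; field_simp [(sub_pos.2 hab).ne']; ring)
  have hΦx' := hΦ.map_le_of_eq_convex_comb (z := a + b - x) hb ha ht₀ ht₁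
    (by simp only [t]; field_simp [(sub_pos.2 hab).ne']; ring)
  linarith

lemma abs_le_of_mem_Icc (hΦ : ConvexOn ℝ (Icc a b) Φ) {x : ℝ} (hx : x ∈ Icc a b) :
    |Φ x| ≤ 2 * |Φ ((a + b) / 2)| + |Φ a| + |Φ b| := by
  have hx' : a + b - x ∈ Icc a b := ⟨by linarith [hx.2], by linarith [hx.1]⟩
  have hab : a ≤ b := hx.1.trans hx.2
  have hup := hΦ.le_max_of_mem_Icc (left_mem_Icc.2 hab) (right_mem_Icc.2 hab) hx
  have hup' := hΦ.le_max_of_mem_Icc (left_mem_Icc.2 hab) (right_mem_Icc.2 hab) hx'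
  have hlow := hΦ.two_mul_map_midpoint_le hx
  have hmax : max (Φ a) (Φ b) ≤ |Φ a| + |Φ b| :=
    max_le (by linarith [le_abs_self (Φ a), abs_nonneg (Φ b)])
      (by linarith [le_abs_self (Φ b), abs_nonneg (Φ a)])
  rw [abs_le]
  constructor <;> linarith [neg_abs_le (Φ ((a + b) / 2)), abs_nonneg (Φ ((a + b) / 2))]

lemma intervalIntegrable (hΦ : ConvexOn ℝ (Icc a b) Φ) (hab : a ≤ b) :
    IntervalIntegrable Φ volume a b := by
  rw [intervalIntegrable_iff_integrableOn_Ioo_of_le hab]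
  have hcont : ContinuousOn Φ (Ioo a b) := by
    simpa only [interior_Icc] using hΦ.continuousOn_interior
  exact .of_bound measure_Ioo_lt_top (hcont.aestronglyMeasurable measurableSet_Ioo) _
    (ae_restrict_of_forall_mem measurableSet_Ioo fun x hx ↦
      hΦ.abs_le_of_mem_Icc (Ioo_subset_Icc_self hx))

theorem mul_map_midpoint_le_integral (hΦ : ConvexOn ℝ (Icc a b) Φ) (hab : a ≤ b) :
    (b - a) * Φ ((a + b) / 2) ≤ ∫ x in a..b, Φ x := by
  have hint := hΦ.intervalIntegrable hab
  have h := integral_mono_on hab intervalIntegrable_const (hint.add hint.comp_reflect)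
    fun x hx ↦ hΦ.two_mul_map_midpoint_le hx
  rw [intervalIntegral.integral_const, smul_eq_mul,
    ← two_mul_integral_eq_integral_add_reflect hint] at h
  linarith

theorem integral_le_mul_average (hΦ : ConvexOn ℝ (Icc a b) Φ) (hab : a ≤ b) :
    ∫ x in a..b, Φ x ≤ (b - a) * ((Φ a + Φ b) / 2) := by
  have hint := hΦ.intervalIntegrable hab
  have h := integral_mono_on hab (hint.add hint.comp_reflect) intervalIntegrable_const
    fun x hx ↦ hΦ.add_map_reflect_le hx
  rw [intervalIntegral.integral_const, smul_eq_mul,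
    ← two_mul_integral_eq_integral_add_reflect hint] at h
  linarith

end ConvexOn

theorem hermite_hadamard_refinement (a b : ℝ) (hab : a < b) (Φ : ℝ → ℝ)
    (hΦ : ConvexOn ℝ (Set.Icc a b) Φ) (p : ℝ) (hp : p ∈ Set.Icc (0:ℝ) 1) :
    Φ ((a + b) / 2) ≤
        p * Φ ((p * b + (2 - p) * a) / 2) +
          (1 - p) * Φ (((1 + p) * b + (1 - p) * a) / 2) ∧
    p * Φ ((p * b + (2 - p) * a) / 2) +
          (1 - p) * Φ (((1 + p) * b + (1 - p) * a) / 2) ≤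
        (1 / (b - a)) * ∫ t in a..b, Φ t ∧
    (1 / (b - a)) * ∫ t in a..b, Φ t ≤
        (1 / 2) * (Φ (p * b + (1 - p) * a) + p * Φ a + (1 - p) * Φ b) ∧
    (1 / 2) * (Φ (p * b + (1 - p) * a) + p * Φ a + (1 - p) * Φ b) ≤
        (Φ a + Φ b) / 2 := by
  obtain ⟨hp₀, hp₁⟩ := hp
  set c := p * b + (1 - p) * a with hc
  have hac : a ≤ c := by nlinarith
  have hcb : c ≤ b := by nlinarith
  have hΦl : ConvexOn ℝ (Icc a c) Φ := hΦ.subset (Icc_subset_Icc_right hcb) (convex_Icc a c)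
  have hΦr : ConvexOn ℝ (Icc c b) Φ := hΦ.subset (Icc_subset_Icc_left hac) (convex_Icc c b)
  have hsplit : ∫ t in a..b, Φ t = (∫ t in a..c, Φ t) + ∫ t in c..b, Φ t :=
    (integral_add_adjacent_intervals (hΦl.intervalIntegrable hac)
      (hΦr.intervalIntegrable hcb)).symm
  have hmidl : (p * b + (2 - p) * a) / 2 = (a + c) / 2 := by ring
  have hmidr : ((1 + p) * b + (1 - p) * a) / 2 = (c + b) / 2 := by ring
  have hlenl : c - a = p * (b - a) := by ring
  have hlenr : b - c = (1 - p) * (b - a) := by ring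
  have hlow := add_le_add (hΦl.mul_map_midpoint_le_integral hac)
    (hΦr.mul_map_midpoint_le_integral hcb)
  have hhigh := add_le_add (hΦl.integral_le_mul_average hac) (hΦr.integral_le_mul_average hcb)
  rw [hmidl, hmidr, one_div_mul_eq_div]
  rw [hlenl, hlenr, ← hsplit] at hlow hhigh
  have hΦc :=
    hΦ.map_le_of_eq_convex_comb (right_mem_Icc.2 hab.le) (left_mem_Icc.2 hab.le) hp₀ hp₁ hc
  have hba : 0 < b - a := sub_pos.2 hab
  refine ⟨hΦ.map_le_of_eq_convex_comb ⟨?_, ?_⟩ ⟨?_, ?_⟩ hp₀ hp₁ (by ring),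
    (le_div_iff₀ hba).2 ?_, (div_le_iff₀ hba).2 ?_, ?_⟩ <;> linarith
end

section
/- For all real numbers a, b > 0, ∫₀¹ ((1-t)a + tb - ((1-t)/a + t/b)^(-1)) / (t(1-t)) dt = (a-b)(log a - log b). -/
/-!
On `(0, 1)` the integrand simplifies to `(a - b)² / (t a + (1 - t) b)`, and
`t ↦ (a - b) log (t a + (1 - t) b)` is an antiderivative of it on `[0, 1]`.
-/

open Set Real intervalIntegral

theorem convexCombination_pos {a b t : ℝ} (ha : 0 < a) (hb : 0 < b) (ht : t ∈ Icc 0 1) :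
    0 < t * a + (1 - t) * b := by
  nlinarith [mul_nonneg ht.1 ha.le, mul_nonneg (sub_nonneg.mpr ht.2) hb.le]

theorem arithMean_sub_harmMean_div_eq {a b t : ℝ} (ha : a ≠ 0) (hb : b ≠ 0)
    (ht₀ : t ≠ 0) (ht₁ : t ≠ 1) (hd : t * a + (1 - t) * b ≠ 0) :
    ((1 - t) * a + t * b - ((1 - t) / a + t / b)⁻¹) / (t * (1 - t)) =
      (a - b) * ((a - b) / (t * a + (1 - t) * b)) := by
  have h1t : 1 - t ≠ 0 := sub_ne_zero.mpr (Ne.symm ht₁)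
  have hharm : (1 - t) / a + t / b = (t * a + (1 - t) * b) / (a * b) := by
    field_simp
    ring
  rw [hharm, inv_div]
  field_simp
  ring

theorem integral_div_convexCombination {a b : ℝ} (ha : 0 < a) (hb : 0 < b) :
    ∫ t in (0 : ℝ)..1, (a - b) / (t * a + (1 - t) * b) = log a - log b := by
  have hpos : ∀ t ∈ uIcc (0 : ℝ) 1, 0 < t * a + (1 - t) * b := fun t ht ↦
    convexCombination_pos ha hb (by rwa [uIcc_of_le zero_le_one] at ht)
  have hderiv : ∀ t ∈ uIcc (0 : ℝ) 1,
      HasDerivAt (fun t ↦ log (t * a + (1 - t) * b)) ((a - b) / (t * a + (1 - t) * b)) t := by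
    intro t ht
    have hlin : HasDerivAt (fun t : ℝ ↦ t * a + (1 - t) * b) (a - b) t :=
      (((hasDerivAt_id' t).mul_const a).add
        (((hasDerivAt_id' t).const_sub 1).mul_const b)).congr_deriv (by ring)
    exact hlin.log (hpos t ht).ne'
  have hcont : ContinuousOn (fun t ↦ (a - b) / (t * a + (1 - t) * b)) (uIcc 0 1) :=
    continuousOn_const.div (by fun_prop) fun t ht ↦ (hpos t ht).ne'
  rw [integral_eq_sub_of_hasDerivAt hderiv hcont.intervalIntegrable]
  simp

theorem amh_integral (a b : ℝ) (ha : 0 < a) (hb : 0 < b) :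
    ∫ t in (0:ℝ)..1,
        ((1 - t) * a + t * b - ((1 - t) / a + t / b)⁻¹) / (t * (1 - t)) =
      (a - b) * (Real.log a - Real.log b) := by
  have hsimp : EqOn (fun t ↦ ((1 - t) * a + t * b - ((1 - t) / a + t / b)⁻¹) / (t * (1 - t)))
      (fun t ↦ (a - b) * ((a - b) / (t * a + (1 - t) * b))) (Ioo 0 1) := fun t ht ↦
    arithMean_sub_harmMean_div_eq ha.ne' hb.ne' ht.1.ne' ht.2.ne
      (convexCombination_pos ha hb (Ioo_subset_Icc_self ht)).ne'
  rw [integral_congr_Ioo_of_le zero_le_one hsimp, integral_const_mul,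
    integral_div_convexCombination ha hb]
end

section
/- The function h(λ) = λ(1-λ) - (2λ-1)² sin(πλ)/π is nonnegative for all λ ∈ [0,1]. -/
/-!
From `sin x ≤ x` we get `(2λ-1)² sin(πλ) ≤ π λ (2λ-1)²`, and `(2λ-1)² ≤ 1-λ` exactly when
`λ ≤ 3/4`; this covers `[0, 3/4]`. The substitution `λ ↦ 1-λ` leaves `h` unchanged and maps
`[3/4, 1]` into `[0, 3/4]`.
-/

open Real

lemma sq_two_mul_sub_one_le_one_sub {l : ℝ} (h0 : 0 ≤ l) (h1 : l ≤ 3 / 4) :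
    (2 * l - 1) ^ 2 ≤ 1 - l := by
  nlinarith

lemma sq_two_mul_sub_one_mul_sin_le {l : ℝ} (h0 : 0 ≤ l) (h1 : l ≤ 3 / 4) :
    (2 * l - 1) ^ 2 * sin (π * l) ≤ π * (l * (1 - l)) := by
  have hπl : 0 ≤ π * l := mul_nonneg pi_pos.le h0
  calc (2 * l - 1) ^ 2 * sin (π * l)
      ≤ (2 * l - 1) ^ 2 * (π * l) := mul_le_mul_of_nonneg_left (sin_le hπl) (sq_nonneg _)
    _ ≤ (1 - l) * (π * l) := mul_le_mul_of_nonneg_right (sq_two_mul_sub_one_le_one_sub h0 h1) hπl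
    _ = π * (l * (1 - l)) := by ring

theorem h_nonneg (l : ℝ) (hl : l ∈ Set.Icc (0:ℝ) 1) :
    0 ≤ l * (1 - l) - (2 * l - 1) ^ 2 * Real.sin (Real.pi * l) / Real.pi := by
  obtain ⟨h0, h1⟩ := hl
  rw [sub_nonneg, div_le_iff₀ pi_pos, mul_comm _ π]
  rcases le_total l (3 / 4) with hle | hge
  · exact sq_two_mul_sub_one_mul_sin_le h0 hle
  · have hsym := sq_two_mul_sub_one_mul_sin_le (l := 1 - l) (by linarith) (by linarith)
    have hsin : sin (π * (1 - l)) = sin (π * l) := by rw [mul_one_sub, sin_pi_sub]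
    have hsq : (2 * (1 - l) - 1) ^ 2 = (2 * l - 1) ^ 2 := by ring
    rwa [hsin, hsq, sub_sub_cancel, mul_comm (1 - l)] at hsym
end

section
/- For all real numbers a, b > 0 and λ ∈ [0,1]: (a^(1-λ)b^λ + a^λb^(1-λ))/2 ≥ (a+b)/2 - 2λ(1-λ)sin(πλ)(√a - √b)² - (2λ-1)²·(sin(πλ)/(2π))·(b-a)·log(b/a). -/
/-!
Put `a = exp (m - d)`, `b = exp (m + d)` and `μ = 2λ - 1`, so that `sin (π λ) = cos (π μ / 2) =: c`.
After division by `exp m` the inequality reads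
`cosh d - cosh (μ d) ≤ (1 - μ²) c (cosh d - 1) + (2 μ² c / π) d sinh d`.
Comparing coefficients of `d^(2n) / (2n)!` reduces it to `1 - μ^(2n) ≤ (1 - μ²) c + 4 n μ² c / π`
for `n ≥ 1`, which follows by induction from the case `n = 1`. That case is an estimate for
`cos (π μ / 2)` which is sharp to second order both at `μ = 0` and at `|μ| = 1`; it is proved with
a quartic lower bound for `cos` when `|μ| ≤ 1/2` and the cubic lower bound for `sin` otherwise.
-/

open Real

theorem one_sub_sq_div_two_add_pow_four_div_le_cos {y : ℝ} (hy : y ^ 2 ≤ 8) :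
    1 - y ^ 2 / 2 + y ^ 4 / 32 ≤ cos y := by
  have hhalf : 0 ≤ 1 - (y / 2) ^ 2 / 2 := by nlinarith
  have hsq := pow_le_pow_left₀ hhalf (one_sub_sq_div_two_le_cos (x := y / 2)) 2
  have hdouble : cos y = 2 * cos (y / 2) ^ 2 - 1 := by
    rw [← cos_two_mul, mul_div_cancel₀ _ two_ne_zero]
  rw [hdouble]
  nlinarith

theorem one_sub_sq_mul_pi_mul_one_sub_cos_le_of_le_half {x : ℝ} (h0 : 0 ≤ x) (h1 : x ≤ 1 / 2) :
    (1 - x ^ 2) * π * (1 - cos (π * x / 2)) ≤ 4 * x ^ 2 * cos (π * x / 2) := by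
  have hπl := pi_gt_d4
  have hπu := pi_lt_d4
  have hx2 : x ^ 2 ≤ 1 / 4 := by nlinarith
  have hy : 0 ≤ π * x / 2 ∧ π * x / 2 ≤ 1 := ⟨by positivity, by nlinarith⟩
  have hcos := one_sub_sq_div_two_add_pow_four_div_le_cos (y := π * x / 2) (by nlinarith)
  have hcoef : 0 ≤ (4 - π ^ 3 / 8) + x ^ 2 * (π ^ 5 / 512 - (4 - π) * π ^ 2 / 8)
      + x ^ 4 * ((4 - π) * π ^ 4 / 512) := by
    have h2 : π ^ 2 < 3.1416 ^ 2 := by gcongr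
    have h3 : π ^ 3 < 3.1416 ^ 3 := by gcongr
    have h5 : 3.1415 ^ 5 < π ^ 5 := by gcongr
    norm_num at h2 h3 h5
    have hK : π ^ 5 / 512 ≤ (4 - π) * π ^ 2 / 8 := by
      have : π ^ 3 / 64 ≤ 4 - π := by linarith
      nlinarith [mul_le_mul_of_nonneg_left this (sq_nonneg π)]
    have hm : 0 ≤ (4 - π) * π ^ 4 / 512 := by nlinarith [pi_pos]
    nlinarith [mul_nonneg (sub_nonneg.2 hx2) (sub_nonneg.2 hK), mul_nonneg (sq_nonneg (x ^ 2)) hm]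
  have hB : 0 ≤ (1 - x ^ 2) * π + 4 * x ^ 2 := by nlinarith
  nlinarith [mul_le_mul_of_nonneg_right hcos hB, mul_nonneg (sq_nonneg x) hcoef]

theorem one_sub_sq_mul_pi_mul_one_sub_cos_le_of_half_le {x : ℝ} (h0 : 1 / 2 ≤ x) (h1 : x ≤ 1) :
    (1 - x ^ 2) * π * (1 - cos (π * x / 2)) ≤ 4 * x ^ 2 * cos (π * x / 2) := by
  have hπl := pi_gt_d4
  have hπu := pi_lt_d4
  obtain ⟨t, rfl⟩ : ∃ t, 1 - t = x := ⟨1 - x, by ring⟩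
  have ht0 : 0 ≤ t := by linarith
  have ht1 : t ≤ 1 / 2 := by linarith
  rw [show π * (1 - t) / 2 = π / 2 - π * t / 2 by ring, cos_pi_div_two_sub]
  have hsin := sin_ge_sub_cube (x := π * t / 2) (by positivity)
  have hcoef : 0 ≤ π * (π - 3) + (π * (4 - π) / 2 - π ^ 3 / 12) * t
      + π ^ 3 * (4 - π) * (t ^ 2 / 24 - t ^ 3 / 48) := by
    have hend : 0 < 3 / 4 * π ^ 2 - 2 * π - π ^ 3 / 96 - π ^ 4 / 128 := by
      have h2 : 3.1415 ^ 2 < π ^ 2 := by gcongr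
      have h3 : π ^ 3 < 3.1416 ^ 3 := by gcongr
      have h4 : π ^ 4 < 3.1416 ^ 4 := by gcongr
      norm_num at h2 h3 h4
      linarith
    have hm : 0 ≤ π ^ 3 * (4 - π) := by nlinarith [pi_pos]
    have hmk : π ^ 3 * (4 - π) / 32 ≤ π ^ 3 / 12 - π * (4 - π) / 2 := by nlinarith [pi_pos]
    have hcube : t ^ 2 / 32 ≤ t ^ 2 / 24 - t ^ 3 / 48 := by nlinarith [sq_nonneg t]
    nlinarith [mul_le_mul_of_nonneg_left hcube hm,
      mul_nonneg (sub_nonneg.2 ht1) (sub_nonneg.2 hmk),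
      mul_nonneg (sub_nonneg.2 ht1) (mul_nonneg hm (sub_nonneg.2 ht1))]
  have hB : 0 ≤ (1 - (1 - t) ^ 2) * π + 4 * (1 - t) ^ 2 := by nlinarith
  nlinarith [mul_le_mul_of_nonneg_right hsin hB, mul_nonneg (sq_nonneg t) hcoef]

theorem one_sub_sq_mul_pi_mul_one_sub_cos_le {μ : ℝ} (h : |μ| ≤ 1) :
    (1 - μ ^ 2) * π * (1 - cos (π * μ / 2)) ≤ 4 * μ ^ 2 * cos (π * μ / 2) := by
  wlog hμ : 0 ≤ μ generalizing μ
  · simpa [neg_div, mul_neg] using this (μ := -μ) (by rwa [abs_neg]) (by linarith)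
  rcases le_total μ (1 / 2) with hμ' | hμ'
  · exact one_sub_sq_mul_pi_mul_one_sub_cos_le_of_le_half hμ hμ'
  · exact one_sub_sq_mul_pi_mul_one_sub_cos_le_of_half_le hμ' (abs_le.1 h).2

theorem one_sub_sq_mul_pi_le_four_mul_cos {μ : ℝ} (h : |μ| ≤ 1) :
    (1 - μ ^ 2) * π ≤ 4 * cos (π * μ / 2) := by
  obtain ⟨hμl, hμu⟩ := abs_le.1 h
  have hc : 0 ≤ cos (π * μ / 2) :=
    cos_nonneg_of_neg_pi_div_two_le_of_le (by nlinarith [pi_pos]) (by nlinarith [pi_pos])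
  have hμ2 : 0 ≤ 1 - μ ^ 2 := by nlinarith
  nlinarith [one_sub_sq_mul_pi_mul_one_sub_cos_le h,
    mul_le_mul_of_nonneg_right pi_lt_four.le (mul_nonneg hμ2 hc)]

theorem one_sub_pow_succ_le {p α β : ℝ} (hp0 : 0 ≤ p) (hp1 : p ≤ 1)
    (h₁ : 1 - p ≤ α + 2 * β) (h₂ : p * (1 - p) ≤ 2 * β) (n : ℕ) :
    1 - p ^ (n + 1) ≤ α + 2 * (n + 1) * β := by
  induction n with
  | zero => simpa using h₁
  | succ n ih =>
    have hpow : p ^ (n + 1) * (1 - p) ≤ p * (1 - p) :=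
      mul_le_mul_of_nonneg_right (pow_le_of_le_one hp0 hp1 n.succ_ne_zero) (by linarith)
    push_cast
    linear_combination ih + hpow + h₂

theorem cosh_sub_cosh_mul_le {μ α β : ℝ}
    (h : ∀ n : ℕ, 1 - (μ ^ 2) ^ (n + 1) ≤ α + 2 * (n + 1) * β) (d : ℝ) :
    cosh d - cosh (μ * d) ≤ α * (cosh d - 1) + β * (d * sinh d) := by
  have tail (x : ℝ) : HasSum (fun n : ℕ => x ^ (2 * (n + 1)) / (2 * (n + 1)).factorial)
      (cosh x - 1) := by
    simpa using (hasSum_nat_add_iff' 1).2 (hasSum_cosh x)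
  have hlhs := (tail d).sub (tail (μ * d))
  have hrhs := ((tail d).mul_left α).add ((hasSum_sinh d).mul_left d |>.mul_left β)
  rw [sub_sub_sub_cancel_right] at hlhs
  refine hasSum_le (fun n => ?_) hlhs hrhs
  have hD : 0 ≤ d ^ (2 * (n + 1)) / (2 * (n + 1)).factorial := by
    rw [pow_mul]; positivity
  -- `d * sinh d` contributes `2 (n + 1)` times the coefficient `d ^ (2n+2) / (2n+2)!`.
  have hfac : ((2 * (n + 1)).factorial : ℝ) = (2 * (n + 1)) * (2 * n + 1).factorial := by
    rw [show 2 * (n + 1) = 2 * n + 1 + 1 by ring, Nat.factorial_succ]; push_cast; ring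
  convert mul_le_mul_of_nonneg_left (h n) hD using 1
  · rw [mul_pow, pow_mul, pow_mul]; ring
  · rw [hfac]; field_simp; ring

theorem cosh_sub_cosh_mul_le_of_abs_le_one {μ : ℝ} (h : |μ| ≤ 1) (d : ℝ) :
    cosh d - cosh (μ * d) ≤ (1 - μ ^ 2) * cos (π * μ / 2) * (cosh d - 1)
      + 2 * μ ^ 2 * cos (π * μ / 2) / π * (d * sinh d) := by
  refine cosh_sub_cosh_mul_le (one_sub_pow_succ_le (sq_nonneg μ) ?_ ?_ ?_) d
  · nlinarith [abs_le.1 h]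
  · have hA : (1 - μ ^ 2) * (1 - cos (π * μ / 2)) ≤ 4 * μ ^ 2 * cos (π * μ / 2) / π := by
      rw [le_div_iff₀ pi_pos]; linarith [one_sub_sq_mul_pi_mul_one_sub_cos_le h]
    linear_combination hA
  · have hB : μ ^ 2 * (1 - μ ^ 2) ≤ 4 * μ ^ 2 * cos (π * μ / 2) / π := by
      rw [le_div_iff₀ pi_pos]
      linarith [mul_le_mul_of_nonneg_left (one_sub_sq_mul_pi_le_four_mul_cos h) (sq_nonneg μ)]
    linear_combination hB

theorem heinz_mean_exp_sub_exp_add (m d l : ℝ) :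
    (exp (m - d) ^ (1 - l) * exp (m + d) ^ l + exp (m - d) ^ l * exp (m + d) ^ (1 - l)) / 2
      = exp m * cosh ((2 * l - 1) * d) := by
  simp only [← exp_mul, ← exp_add, cosh_eq]
  rw [mul_div_assoc', mul_add, ← exp_add, ← exp_add]
  ring_nf

theorem exp_sub_add_exp_add_div_two (m d : ℝ) :
    (exp (m - d) + exp (m + d)) / 2 = exp m * cosh d := by
  simp only [cosh_eq, sub_eq_add_neg, exp_add]; ring

theorem exp_add_sub_exp_sub (m d : ℝ) : exp (m + d) - exp (m - d) = exp m * (2 * sinh d) := by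
  simp only [sinh_eq, sub_eq_add_neg, exp_add]; ring

theorem sqrt_exp_sub_sqrt_exp_sq (m d : ℝ) :
    (√(exp (m - d)) - √(exp (m + d))) ^ 2 = exp m * (2 * (cosh d - 1)) := by
  have hsq (x : ℝ) : exp (x / 2) ^ 2 = exp x := by rw [sq, ← exp_add, add_halves]
  rw [← exp_half, ← exp_half, sub_sq, hsq, hsq, mul_assoc, ← exp_add,
    show (m - d) / 2 + (m + d) / 2 = m by ring, cosh_eq]
  simp only [sub_eq_add_neg, exp_add]
  ring

theorem log_exp_add_div_exp_sub (m d : ℝ) : log (exp (m + d) / exp (m - d)) = 2 * d := by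
  rw [← exp_sub, log_exp]; ring

theorem new_reverse_heinz (a b l : ℝ) (ha : 0 < a) (hb : 0 < b)
    (hl : l ∈ Set.Icc (0:ℝ) 1) :
    (a ^ (1 - l) * b ^ l + a ^ l * b ^ (1 - l)) / 2 ≥
      (a + b) / 2 -
        2 * l * (1 - l) * Real.sin (Real.pi * l) *
          (Real.sqrt a - Real.sqrt b) ^ 2 -
        (2 * l - 1) ^ 2 * (Real.sin (Real.pi * l) / (2 * Real.pi)) * (b - a) *
          Real.log (b / a) := by
  obtain ⟨m, d, rfl, rfl⟩ : ∃ m d, exp (m - d) = a ∧ exp (m + d) = b :=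
    ⟨(log a + log b) / 2, (log b - log a) / 2,
      by ring_nf; exact exp_log ha, by ring_nf; exact exp_log hb⟩
  have hsin : sin (π * l) = cos (π * (2 * l - 1) / 2) := by
    rw [show π * (2 * l - 1) / 2 = π * l - π / 2 by ring, cos_sub_pi_div_two]
  have hμ : |2 * l - 1| ≤ 1 := abs_le.2 ⟨by linarith [hl.1], by linarith [hl.2]⟩
  have key := mul_le_mul_of_nonneg_left (cosh_sub_cosh_mul_le_of_abs_le_one hμ d) (exp_pos m).le
  rw [heinz_mean_exp_sub_exp_add, exp_sub_add_exp_add_div_two, exp_add_sub_exp_sub,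
    sqrt_exp_sub_sqrt_exp_sq, log_exp_add_div_exp_sub, hsin]
  linear_combination key
end

section
/- For λ ∈ (0,1) and p ∈ [0,1], ∫₀^(1/2) (t/(1-t))^λ dt ≥ ((1-λ)/2)·M_λ(p) + (λ/2)·m_λ(p), where M_λ(p) = (1/2)·((p(1-λ)/(2-p(1-λ)))^λ + (1-p)·((1-λ)/(1+λ))^λ) and m_λ(p) = p·((2-2λ+pλ)/(2+2λ-pλ))^λ + (1-p)·((2-λ+pλ)/(2+λ-pλ))^λ. -/
/-!
On `(0, 1)`, `Ψ(t) = (t / (1 - t)) ^ λ = t ^ λ (1 - t) ^ (-λ)` has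
`Ψ''(t) = λ t ^ (λ - 2) (1 - t) ^ (-λ - 2) (2t - (1 - λ))`, so `Ψ` is concave on `[0, (1 - λ)/2]`
and convex on `[(1 - λ)/2, 1/2]`. Cut the first interval at `p(1 - λ)/2` and the second at
`(1 - λ + pλ)/2`. By Hermite–Hadamard, the trapezoid rule bounds the integral of `Ψ` from below on
the two concave pieces and the midpoint rule does so on the two convex ones; since `Ψ(0) = 0`, the
four terms add up to the stated bound. Both Hermite–Hadamard bounds come from pairing `t` with its
reflection `a + b - t` in the interval `[a, b]`.
-/

open Set MeasureTheory intervalIntegral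

section HermiteHadamard

variable {f : ℝ → ℝ} {a b : ℝ}

lemma IntervalIntegrable.comp_add_sub (hf : IntervalIntegrable f volume a b) :
    IntervalIntegrable (fun t => f (a + b - t)) volume a b := by
  simpa using (hf.comp_sub_left (a + b)).symm

lemma intervalIntegral_add_comp_add_sub (hf : IntervalIntegrable f volume a b) :
    ∫ t in a..b, (f t + f (a + b - t)) = 2 * ∫ t in a..b, f t := by
  have hsymm : ∫ t in a..b, f (a + b - t) = ∫ t in a..b, f t := by
    simp [integral_comp_sub_left]
  rw [integral_add hf hf.comp_add_sub, hsymm, two_mul]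

lemma mul_le_two_mul_intervalIntegral {c : ℝ} (hab : a ≤ b) (hf : IntervalIntegrable f volume a b)
    (h : ∀ t ∈ Icc a b, c ≤ f t + f (a + b - t)) :
    (b - a) * c ≤ 2 * ∫ t in a..b, f t := by
  rw [← intervalIntegral_add_comp_add_sub hf, ← smul_eq_mul, ← intervalIntegral.integral_const]
  exact integral_mono_on hab intervalIntegrable_const (hf.add hf.comp_add_sub) h

lemma ConcaveOn.map_left_add_map_right_le (hf : ConcaveOn ℝ (Icc a b) f) {t : ℝ}
    (ht : t ∈ Icc a b) : f a + f b ≤ f t + f (a + b - t) := by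
  obtain ⟨hat, htb⟩ := ht
  rcases hat.eq_or_lt with rfl | hlt
  · simp
  have hba : 0 < b - a := by linarith
  have hμ : 0 ≤ (b - t) / (b - a) := div_nonneg (by linarith) hba.le
  have hν : 0 ≤ (t - a) / (b - a) := div_nonneg (by linarith) hba.le
  have hμν : (b - t) / (b - a) + (t - a) / (b - a) = 1 := by field_simp; ring
  have ha : a ∈ Icc a b := left_mem_Icc.2 (hat.trans htb)
  have hb : b ∈ Icc a b := right_mem_Icc.2 (hat.trans htb)
  have h₁ := hf.2 ha hb hμ hν hμν
  have h₂ := hf.2 ha hb hν hμ (by rw [add_comm, hμν])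
  simp only [smul_eq_mul] at h₁ h₂
  rw [show (b - t) / (b - a) * a + (t - a) / (b - a) * b = t by field_simp; ring] at h₁
  rw [show (t - a) / (b - a) * a + (b - t) / (b - a) * b = a + b - t by field_simp; ring] at h₂
  linear_combination h₁ + h₂ - (f a + f b) * hμν

theorem ConcaveOn.trapezoid_le_intervalIntegral (hab : a ≤ b) (hf : ConcaveOn ℝ (Icc a b) f)
    (hfi : IntervalIntegrable f volume a b) :
    (b - a) * ((f a + f b) / 2) ≤ ∫ t in a..b, f t := by
  have := mul_le_two_mul_intervalIntegral hab hfi fun t ht => hf.map_left_add_map_right_le ht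
  linarith

theorem ConvexOn.midpoint_le_intervalIntegral (hab : a ≤ b) (hf : ConvexOn ℝ (Icc a b) f)
    (hfi : IntervalIntegrable f volume a b) :
    (b - a) * f ((a + b) / 2) ≤ ∫ t in a..b, f t := by
  have hmid : ∀ t ∈ Icc a b, 2 * f ((a + b) / 2) ≤ f t + f (a + b - t) := by
    intro t ht
    have ht' : a + b - t ∈ Icc a b := ⟨by linarith [ht.2], by linarith [ht.1]⟩
    have := hf.2 ht ht' (by norm_num : (0:ℝ) ≤ 1 / 2) (by norm_num : (0:ℝ) ≤ 1 / 2) (by norm_num)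
    simp only [smul_eq_mul] at this
    rw [show 1 / 2 * t + 1 / 2 * (a + b - t) = (a + b) / 2 by ring] at this
    linarith
  have := mul_le_two_mul_intervalIntegral hab hfi hmid
  linarith

end HermiteHadamard

theorem le_intervalIntegral_of_concaveOn_of_convexOn {f : ℝ → ℝ} {a x c y b : ℝ}
    (hax : a ≤ x) (hxc : x ≤ c) (hcy : c ≤ y) (hyb : y ≤ b)
    (hconc : ConcaveOn ℝ (Icc a c) f) (hconv : ConvexOn ℝ (Icc c b) f)
    (hf : IntervalIntegrable f volume a b) :
    (x - a) * ((f a + f x) / 2) + (c - x) * ((f x + f c) / 2) +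
        (y - c) * f ((c + y) / 2) + (b - y) * f ((y + b) / 2) ≤ ∫ t in a..b, f t := by
  have hi : ∀ {u v}, a ≤ u → u ≤ v → v ≤ b → IntervalIntegrable f volume u v :=
    fun hau huv hvb => hf.mono_set <| by
      rw [uIcc_of_le huv, uIcc_of_le (hau.trans (huv.trans hvb))]
      exact Icc_subset_Icc hau hvb
  have hcb := hcy.trans hyb
  have hac := hax.trans hxc
  have hay := hac.trans hcy
  have hax' := hi le_rfl hax (hxc.trans hcb)
  have hxc' := hi hax hxc hcb
  have hcy' := hi hac hcy hyb
  have hyb' := hi hay hyb le_rfl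
  calc _ ≤ (∫ t in a..x, f t) + (∫ t in x..c, f t) + (∫ t in c..y, f t) + ∫ t in y..b, f t := by
        gcongr ?_ + ?_ + ?_ + ?_
        · exact (hconc.subset (Icc_subset_Icc_right hxc) (convex_Icc _ _)
            ).trapezoid_le_intervalIntegral hax hax'
        · exact (hconc.subset (Icc_subset_Icc_left hax) (convex_Icc _ _)
            ).trapezoid_le_intervalIntegral hxc hxc'
        · exact (hconv.subset (Icc_subset_Icc_right hyb) (convex_Icc _ _)
            ).midpoint_le_intervalIntegral hcy hcy'
        · exact (hconv.subset (Icc_subset_Icc_left hcy) (convex_Icc _ _)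
            ).midpoint_le_intervalIntegral hyb hyb'
    _ = ∫ t in a..b, f t := by
        rw [integral_add_adjacent_intervals hax' hxc',
          integral_add_adjacent_intervals (hax'.trans hxc') hcy',
          integral_add_adjacent_intervals ((hax'.trans hxc').trans hcy') hyb']

lemma hasDerivAt_rpow_mul_one_sub_rpow (a b : ℝ) {t : ℝ} (ht : t ∈ Ioo 0 1) :
    HasDerivAt (fun t => t ^ a * (1 - t) ^ b)
      (t ^ (a - 1) * (1 - t) ^ (b - 1) * (a * (1 - t) - b * t)) t := by
  obtain ⟨ht₀, ht₁⟩ := ht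
  have hs : 0 < 1 - t := by linarith
  have h₁ := Real.hasDerivAt_rpow_const (p := a) (Or.inl ht₀.ne')
  have h₂ := ((hasDerivAt_id t).const_sub 1).rpow_const (p := b) (Or.inl hs.ne')
  refine (h₁.mul h₂).congr_deriv ?_
  simp only [id]
  rw [Real.rpow_sub_one ht₀.ne', Real.rpow_sub_one hs.ne']
  field_simp
  ring

lemma div_one_sub_rpow_eq {l t : ℝ} (ht : t ∈ Ico 0 1) :
    (t / (1 - t)) ^ l = t ^ l * (1 - t) ^ (-l) := by
  have hs : 0 ≤ 1 - t := by linarith [ht.2]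
  rw [Real.div_rpow ht.1 hs, Real.rpow_neg hs, div_eq_mul_inv]

lemma hasDerivAt_div_one_sub_rpow (l : ℝ) {t : ℝ} (ht : t ∈ Ioo 0 1) :
    HasDerivAt (fun t => (t / (1 - t)) ^ l) (l * (t ^ (l - 1) * (1 - t) ^ (-l - 1))) t := by
  have heq : (fun t => (t / (1 - t)) ^ l) =ᶠ[nhds t] fun t => t ^ l * (1 - t) ^ (-l) :=
    Filter.mem_of_superset (isOpen_Ioo.mem_nhds ht) fun s hs =>
      div_one_sub_rpow_eq (Ioo_subset_Ico_self hs)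
  refine ((hasDerivAt_rpow_mul_one_sub_rpow l (-l) ht).congr_of_eventuallyEq heq).congr_deriv ?_
  ring

lemma continuousOn_div_one_sub_rpow {l : ℝ} (hl : 0 ≤ l) :
    ContinuousOn (fun t : ℝ => (t / (1 - t)) ^ l) (Iio 1) := by
  refine ContinuousOn.rpow_const ?_ fun _ _ => Or.inr hl
  exact continuousOn_id.div (continuousOn_const.sub continuousOn_id) fun t ht => by
    simp only [mem_Iio] at ht; linarith

lemma hasDerivAt_deriv_div_one_sub_rpow (l : ℝ) {t : ℝ} (ht : t ∈ Ioo 0 1) :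
    HasDerivAt (fun t => l * (t ^ (l - 1) * (1 - t) ^ (-l - 1)))
      (l * (t ^ (l - 2) * (1 - t) ^ (-l - 2) * (2 * t - (1 - l)))) t := by
  refine ((hasDerivAt_rpow_mul_one_sub_rpow (l - 1) (-l - 1) ht).const_mul l).congr_deriv ?_
  ring_nf

lemma concaveOn_div_one_sub_rpow {l : ℝ} (hl : 0 ≤ l) :
    ConcaveOn ℝ (Icc 0 ((1 - l) / 2)) fun t : ℝ => (t / (1 - t)) ^ l := by
  have hsub : Ioo 0 ((1 - l) / 2) ⊆ Ioo 0 1 := Ioo_subset_Ioo_right (by linarith)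
  refine concaveOn_of_hasDerivWithinAt2_nonpos
    (f' := fun t => l * (t ^ (l - 1) * (1 - t) ^ (-l - 1)))
    (f'' := fun t => l * (t ^ (l - 2) * (1 - t) ^ (-l - 2) * (2 * t - (1 - l)))) (convex_Icc _ _)
    ((continuousOn_div_one_sub_rpow hl).mono fun t ht => by simp only [mem_Iio]; linarith [ht.2])
    (fun t ht => ?_) (fun t ht => ?_) (fun t ht => ?_) <;> simp only [interior_Icc] at ht ⊢
  · exact (hasDerivAt_div_one_sub_rpow l (hsub ht)).hasDerivWithinAt
  · exact (hasDerivAt_deriv_div_one_sub_rpow l (hsub ht)).hasDerivWithinAt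
  · obtain ⟨ht₀, ht₁⟩ := ht
    have : 0 < 1 - t := by linarith
    exact mul_nonpos_of_nonneg_of_nonpos hl
      (mul_nonpos_of_nonneg_of_nonpos (by positivity) (by linarith))

lemma convexOn_div_one_sub_rpow {l : ℝ} (hl₀ : 0 ≤ l) (hl₁ : l ≤ 1) :
    ConvexOn ℝ (Ico ((1 - l) / 2) 1) fun t : ℝ => (t / (1 - t)) ^ l := by
  have hsub : Ioo ((1 - l) / 2) 1 ⊆ Ioo 0 1 := Ioo_subset_Ioo_left (by linarith)
  refine convexOn_of_hasDerivWithinAt2_nonneg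
    (f' := fun t => l * (t ^ (l - 1) * (1 - t) ^ (-l - 1)))
    (f'' := fun t => l * (t ^ (l - 2) * (1 - t) ^ (-l - 2) * (2 * t - (1 - l)))) (convex_Ico _ _)
    ((continuousOn_div_one_sub_rpow hl₀).mono fun t ht => ht.2)
    (fun t ht => ?_) (fun t ht => ?_) (fun t ht => ?_) <;> simp only [interior_Ico] at ht ⊢
  · exact (hasDerivAt_div_one_sub_rpow l (hsub ht)).hasDerivWithinAt
  · exact (hasDerivAt_deriv_div_one_sub_rpow l (hsub ht)).hasDerivWithinAt
  · obtain ⟨ht₀, ht₁⟩ := hsub ht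
    have : 0 < 1 - t := by linarith
    have : 0 ≤ 2 * t - (1 - l) := by linarith [ht.1]
    positivity

lemma div_div_one_sub_div (x : ℝ) {y : ℝ} (hy : y ≠ 0) : x / y / (1 - x / y) = x / (y - x) := by
  rw [one_sub_div hy, div_div_div_cancel_right₀ hy]

theorem psi_integral_lower_bound (l p : ℝ) (hl : l ∈ Set.Ioo (0:ℝ) 1)
    (hp : p ∈ Set.Icc (0:ℝ) 1) :
    ((1 - l) / 2) *
        ((1 / 2) * ((p * (1 - l) / (2 - p * (1 - l))) ^ l +
          (1 - p) * ((1 - l) / (1 + l)) ^ l)) +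
      (l / 2) *
        (p * ((2 - 2 * l + p * l) / (2 + 2 * l - p * l)) ^ l +
          (1 - p) * ((2 - l + p * l) / (2 + l - p * l)) ^ l) ≤
      ∫ t in (0:ℝ)..(1 / 2), (t / (1 - t)) ^ l := by
  obtain ⟨hl₀, hl₁⟩ := hl
  obtain ⟨hp₀, hp₁⟩ := hp
  have key := le_intervalIntegral_of_concaveOn_of_convexOn (f := fun t => (t / (1 - t)) ^ l)
    (a := 0) (x := p * (1 - l) / 2) (c := (1 - l) / 2) (y := (1 - l + p * l) / 2) (b := 1 / 2)
    (by positivity) (by nlinarith) (by nlinarith) (by nlinarith)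
    (concaveOn_div_one_sub_rpow hl₀.le)
    ((convexOn_div_one_sub_rpow hl₀.le hl₁.le).subset (Icc_subset_Ico_right (by norm_num))
      (convex_Icc _ _))
    (ContinuousOn.intervalIntegrable_of_Icc (by norm_num)
      ((continuousOn_div_one_sub_rpow hl₀.le).mono fun t ht => ht.2.trans_lt (by norm_num)))
  rw [show ((1 - l) / 2 + (1 - l + p * l) / 2) / 2 = (2 - 2 * l + p * l) / 4 by ring,
    show ((1 - l + p * l) / 2 + 1 / 2) / 2 = (2 - l + p * l) / 4 by ring] at key
  simp only [zero_div, Real.zero_rpow hl₀.ne', div_div_one_sub_div _ two_ne_zero,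
    div_div_one_sub_div _ four_ne_zero] at key
  convert key using 1
  ring_nf
end

section
/- For all real numbers a, b > 0 and λ ∈ (0,1): (1-λ)a + λb - a^(1-λ)b^λ = (sin(πλ)/π) ∫₀¹ t^(λ-1)(1-t)^(-λ) · ((1-t)a + tb - ((1-t)/a + t/b)^(-1)) dt. -/
/-!
Against the weight `t ^ (λ - 1) * (1 - t) ^ (-λ)` on `(0, 1)`, of total mass
`B(λ, 1 - λ) = π / sin (πλ)`, the arithmetic mean `(1 - t) a + t b` integrates to
`((1 - λ) a + λ b) π / sin (πλ)` by the recurrences `B(λ, 2 - λ) = (1 - λ) B(λ, 1 - λ)` and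
`B(λ + 1, 1 - λ) = λ B(λ, 1 - λ)`. For the harmonic mean `H t = ((1 - t) / a + t / b)⁻¹`, the
substitution `u = t / b * H t` maps `[0, 1]` onto itself with `1 - u = (1 - t) / a * H t` and
`du = H t ^ 2 / (a b) dt`, so it turns `u ^ (λ - 1) * (1 - u) ^ (-λ) du` into
`a ^ (λ - 1) b ^ (-λ) t ^ (λ - 1) (1 - t) ^ (-λ) H t dt`; hence `H` integrates to
`a ^ (1 - λ) b ^ λ π / sin (πλ)`.
-/

open Real MeasureTheory Set ProbabilityTheory

theorem integral_rpow_mul_one_sub_rpow {u v : ℝ} (hu : 0 < u) (hv : 0 < v) :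
    ∫ t in (0:ℝ)..1, t ^ (u - 1) * (1 - t) ^ (v - 1) = beta u v := by
  have h : Complex.betaIntegral u v =
      ((∫ t in (0:ℝ)..1, t ^ (u - 1) * (1 - t) ^ (v - 1) : ℝ) : ℂ) := by
    rw [Complex.betaIntegral, ← intervalIntegral.integral_ofReal]
    refine intervalIntegral.integral_congr fun t ht => ?_
    rw [uIcc_of_le zero_le_one] at ht
    push_cast
    rw [Complex.ofReal_cpow ht.1, Complex.ofReal_cpow (sub_nonneg.2 ht.2)]
    push_cast; rfl
  rw [beta_eq_betaIntegralReal u v hu hv, h, Complex.ofReal_re]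

theorem intervalIntegrable_rpow_mul_one_sub_rpow {u v : ℝ} (hu : 0 < u) (hv : 0 < v) :
    IntervalIntegrable (fun t : ℝ => t ^ (u - 1) * (1 - t) ^ (v - 1)) volume 0 1 :=
  intervalIntegral.intervalIntegrable_of_integral_ne_zero <| by
    rw [integral_rpow_mul_one_sub_rpow hu hv]; exact (beta_pos hu hv).ne'

theorem beta_one_sub (l : ℝ) : beta l (1 - l) = π / sin (π * l) := by
  rw [beta, add_sub_cancel, Gamma_one, div_one, Gamma_mul_Gamma_one_sub]

theorem beta_add_one_one_sub {l : ℝ} (hl : l ≠ 0) :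
    beta (l + 1) (1 - l) = l * (π / sin (π * l)) := by
  rw [← beta_one_sub, beta, beta, Gamma_add_one hl, show l + 1 + (1 - l) = 1 + 1 by ring,
    Gamma_add_one one_ne_zero, add_sub_cancel]
  ring

theorem beta_two_sub {l : ℝ} (hl : l ≠ 1) : beta l (2 - l) = (1 - l) * (π / sin (π * l)) := by
  rw [← beta_one_sub, beta, beta, show 2 - l = (1 - l) + 1 by ring,
    Gamma_add_one (sub_ne_zero.2 hl.symm), show l + (1 - l + 1) = 1 + 1 by ring,
    Gamma_add_one one_ne_zero, add_sub_cancel]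
  ring

theorem continuousOn_rpow_mul_one_sub_rpow (p q : ℝ) :
    ContinuousOn (fun t : ℝ => t ^ p * (1 - t) ^ q) (Ioo 0 1) := fun _ ht =>
  ((continuousAt_id.rpow_const (Or.inl ht.1.ne')).mul
    ((continuousAt_const.sub continuousAt_id).rpow_const
      (Or.inl (sub_pos.2 ht.2).ne'))).continuousWithinAt

section Weight

variable {l : ℝ} (hl : l ∈ Ioo (0:ℝ) 1)
include hl

theorem intervalIntegrable_rpow_mul_one_sub_rpow_neg :
    IntervalIntegrable (fun t : ℝ => t ^ (l - 1) * (1 - t) ^ (-l)) volume 0 1 := by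
  simpa using intervalIntegrable_rpow_mul_one_sub_rpow hl.1 (sub_pos.2 hl.2)

theorem integral_rpow_mul_one_sub_rpow_neg :
    ∫ t in (0:ℝ)..1, t ^ (l - 1) * (1 - t) ^ (-l) = π / sin (π * l) := by
  simpa [beta_one_sub] using integral_rpow_mul_one_sub_rpow hl.1 (sub_pos.2 hl.2)

theorem integral_rpow_mul_one_sub_rpow_neg_mul_affine (a b : ℝ) :
    ∫ t in (0:ℝ)..1, t ^ (l - 1) * (1 - t) ^ (-l) * ((1 - t) * a + t * b) =
      ((1 - l) * a + l * b) * (π / sin (π * l)) := by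
  obtain ⟨hl0, hl1⟩ := hl
  have hsplit : ∀ t ∈ uIcc (0:ℝ) 1, t ^ (l - 1) * (1 - t) ^ (-l) * ((1 - t) * a + t * b) =
      a * (t ^ (l - 1) * (1 - t) ^ ((2 - l) - 1)) +
        b * (t ^ ((l + 1) - 1) * (1 - t) ^ ((1 - l) - 1)) := by
    intro t ht
    rw [uIcc_of_le zero_le_one] at ht
    rw [show (2 - l) - 1 = -l + 1 by ring, show (l + 1) - 1 = (l - 1) + 1 by ring,
      show (1 - l) - 1 = -l by ring, rpow_add_one' (sub_nonneg.2 ht.2) (by linarith),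
      rpow_add_one' ht.1 (by linarith)]
    ring
  rw [intervalIntegral.integral_congr hsplit, intervalIntegral.integral_add,
    intervalIntegral.integral_const_mul, intervalIntegral.integral_const_mul,
    integral_rpow_mul_one_sub_rpow hl0 (by linarith),
    integral_rpow_mul_one_sub_rpow (by linarith) (by linarith),
    beta_two_sub hl1.ne, beta_add_one_one_sub hl0.ne']
  · ring
  · exact (intervalIntegrable_rpow_mul_one_sub_rpow hl0 (by linarith)).const_mul a
  · exact (intervalIntegrable_rpow_mul_one_sub_rpow (by linarith) (by linarith)).const_mul b

end Weight

section HarmonicShare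

variable {a b : ℝ}

noncomputable def harmonicShare (a b t : ℝ) : ℝ := t / b * ((1 - t) / a + t / b)⁻¹

variable (ha : 0 < a) (hb : 0 < b)
include ha hb

theorem one_sub_div_add_div_pos {t : ℝ} (ht : t ∈ Icc (0:ℝ) 1) :
    0 < (1 - t) / a + t / b := by
  rcases ht.2.lt_or_eq with h | rfl
  · exact add_pos_of_pos_of_nonneg (div_pos (sub_pos.2 h) ha) (div_nonneg ht.1 hb.le)
  · simpa using hb

theorem continuousOn_harmonicMean : ContinuousOn (fun t => ((1 - t) / a + t / b)⁻¹) (Icc 0 1) :=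
  ContinuousOn.inv₀ (by fun_prop) fun t ht => (one_sub_div_add_div_pos ha hb ht).ne'

theorem one_sub_harmonicShare {t : ℝ} (ht : t ∈ Icc (0:ℝ) 1) :
    1 - harmonicShare a b t = (1 - t) / a * ((1 - t) / a + t / b)⁻¹ := by
  have := (one_sub_div_add_div_pos ha hb ht).ne'
  rw [harmonicShare, sub_eq_iff_eq_add, ← add_mul]
  exact (mul_inv_cancel₀ this).symm

theorem mapsTo_harmonicShare_Icc : MapsTo (harmonicShare a b) (Icc 0 1) (Icc 0 1) := by
  intro t ht
  have hH := inv_pos.2 (one_sub_div_add_div_pos ha hb ht)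
  refine ⟨mul_nonneg (div_nonneg ht.1 hb.le) hH.le, sub_nonneg.1 ?_⟩
  rw [one_sub_harmonicShare ha hb ht]
  exact mul_nonneg (div_nonneg (sub_nonneg.2 ht.2) ha.le) hH.le

theorem mapsTo_harmonicShare_Ioo : MapsTo (harmonicShare a b) (Ioo 0 1) (Ioo 0 1) := by
  intro t ht
  have hH := inv_pos.2 (one_sub_div_add_div_pos ha hb (Ioo_subset_Icc_self ht))
  refine ⟨mul_pos (div_pos ht.1 hb) hH, sub_pos.1 ?_⟩
  rw [one_sub_harmonicShare ha hb (Ioo_subset_Icc_self ht)]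
  exact mul_pos (div_pos (sub_pos.2 ht.2) ha) hH

theorem hasDerivAt_harmonicShare {t : ℝ} (ht : t ∈ Icc (0:ℝ) 1) :
    HasDerivAt (harmonicShare a b) (((1 - t) / a + t / b)⁻¹ ^ 2 / (a * b)) t := by
  have hD := (one_sub_div_add_div_pos ha hb ht).ne'
  have hden : HasDerivAt (fun t => (1 - t) / a + t / b) (-1 / a + 1 / b) t :=
    (((hasDerivAt_id t).const_sub 1).div_const a).add ((hasDerivAt_id t).div_const b)
  refine (((hasDerivAt_id t).div_const b).mul (hden.inv hD)).congr_deriv ?_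
  simp only [id_eq, Pi.inv_apply]
  field_simp
  ring

theorem rpow_harmonicShare_mul_deriv (l : ℝ) {t : ℝ} (ht : t ∈ Icc (0:ℝ) 1) :
    harmonicShare a b t ^ (l - 1) * (1 - harmonicShare a b t) ^ (-l) *
        (((1 - t) / a + t / b)⁻¹ ^ 2 / (a * b)) =
      a ^ (l - 1) * b ^ (-l) * (t ^ (l - 1) * (1 - t) ^ (-l) * ((1 - t) / a + t / b)⁻¹) := by
  have hH := inv_pos.2 (one_sub_div_add_div_pos ha hb ht)
  set H := ((1 - t) / a + t / b)⁻¹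
  rw [one_sub_harmonicShare ha hb ht, harmonicShare, mul_rpow (div_nonneg ht.1 hb.le) hH.le,
    mul_rpow (div_nonneg (sub_nonneg.2 ht.2) ha.le) hH.le, div_rpow ht.1 hb.le,
    div_rpow (sub_nonneg.2 ht.2) ha.le, rpow_sub_one hH.ne', rpow_sub_one hb.ne',
    rpow_sub_one ha.ne', rpow_neg hH.le, rpow_neg ha.le, rpow_neg hb.le]
  have := (rpow_pos_of_pos hH l).ne'
  have := (rpow_pos_of_pos ha l).ne'
  have := (rpow_pos_of_pos hb l).ne'
  field_simp

theorem integral_rpow_mul_one_sub_rpow_neg_mul_harmonicMean {l : ℝ} (hl : l ∈ Ioo (0:ℝ) 1) :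
    ∫ t in (0:ℝ)..1, t ^ (l - 1) * (1 - t) ^ (-l) * ((1 - t) / a + t / b)⁻¹ =
      a ^ (1 - l) * b ^ l * (π / sin (π * l)) := by
  have hIcc : uIcc (0:ℝ) 1 = Icc 0 1 := uIcc_of_le zero_le_one
  have hIoo : Ioo (min (0:ℝ) 1) (max 0 1) = Ioo 0 1 := by simp
  have hw := intervalIntegrable_rpow_mul_one_sub_rpow_neg hl
  have hwH := hw.mul_continuousOn (hIcc ▸ continuousOn_harmonicMean ha hb)
  rw [intervalIntegrable_iff_integrableOn_Icc_of_le zero_le_one] at hw hwH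
  have hsubst := intervalIntegral.integral_comp_mul_deriv''' (f := harmonicShare a b)
    (f' := fun t => ((1 - t) / a + t / b)⁻¹ ^ 2 / (a * b))
    (g := fun u => u ^ (l - 1) * (1 - u) ^ (-l))
    (hIcc ▸ fun t ht => (hasDerivAt_harmonicShare ha hb ht).continuousAt.continuousWithinAt)
    (hIoo ▸ fun t ht =>
      (hasDerivAt_harmonicShare ha hb (Ioo_subset_Icc_self ht)).hasDerivWithinAt)
    (hIoo ▸ (continuousOn_rpow_mul_one_sub_rpow _ _).mono
      (image_subset_iff.2 (mapsTo_harmonicShare_Ioo ha hb)))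
    (hIcc ▸ hw.mono_set (image_subset_iff.2 (mapsTo_harmonicShare_Icc ha hb)))
    (hIcc ▸ IntegrableOn.congr_fun (hwH.const_mul (a ^ (l - 1) * b ^ (-l)))
      (fun t ht => (rpow_harmonicShare_mul_deriv ha hb l ht).symm) measurableSet_Icc)
  have h0 : harmonicShare a b 0 = 0 := by simp [harmonicShare]
  have h1 : harmonicShare a b 1 = 1 := by simp [harmonicShare, hb.ne']
  simp only [Function.comp_apply] at hsubst
  rw [h0, h1, integral_rpow_mul_one_sub_rpow_neg hl, intervalIntegral.integral_congr
    fun t ht => rpow_harmonicShare_mul_deriv ha hb l (hIcc ▸ ht),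
    intervalIntegral.integral_const_mul] at hsubst
  rw [← hsubst, ← mul_assoc, mul_mul_mul_comm, ← rpow_add ha, ← rpow_add hb]
  simp

end HarmonicShare

theorem ag_difference_integral (a b l : ℝ) (ha : 0 < a) (hb : 0 < b)
    (hl : l ∈ Set.Ioo (0:ℝ) 1) :
    (1 - l) * a + l * b - a ^ (1 - l) * b ^ l =
      (Real.sin (Real.pi * l) / Real.pi) *
        ∫ t in (0:ℝ)..1,
          t ^ (l - 1) * (1 - t) ^ (-l) *
            ((1 - t) * a + t * b - ((1 - t) / a + t / b)⁻¹) := by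
  have hw := intervalIntegrable_rpow_mul_one_sub_rpow_neg hl
  have hA : ContinuousOn (fun t : ℝ => (1 - t) * a + t * b) (uIcc 0 1) := by fun_prop
  have hH := (uIcc_of_le (zero_le_one' ℝ)).symm ▸ continuousOn_harmonicMean ha hb
  have hsin : sin (π * l) ≠ 0 :=
    (sin_pos_of_pos_of_lt_pi (mul_pos pi_pos hl.1) (mul_lt_of_lt_one_right pi_pos hl.2)).ne'
  simp only [mul_sub]
  rw [intervalIntegral.integral_sub (hw.mul_continuousOn hA) (hw.mul_continuousOn hH),
    integral_rpow_mul_one_sub_rpow_neg_mul_affine hl,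
    integral_rpow_mul_one_sub_rpow_neg_mul_harmonicMean ha hb hl, ← sub_mul,
    mul_left_comm, div_mul_div_cancel₀' hsin, div_self pi_ne_zero, mul_one]
end
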